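/- Under the Markov chains U_1–Y_1–(X,U_2) and (U_1,Y_1)–X–U_2 (discrete or jointly Gaussian), I(U_1;Y_1|U_2) = h(X|U_2) − h(X|U_1,U_2) + I(U_1;Y_1|X). -/

import Mathlib

open Real Finset

/-- Probability that the random variable `X` takes value `a`, under pmf `p` on `Ω`. -/
noncomputable def distOf {Ω A : Type*} [Fintype Ω] [DecidableEq A] (p : Ω → ℝ) (X : Ω → A)
    (a : A) : ℝ :=
  ∑ ω ∈ Finset.univ.filter (fun ω => X ω = a), p ω

/-- Shannon entropy (natural log) of a discrete random variable. -/
noncomputable def Hd {Ω A : Type*} [Fintype Ω] [Fintype A] [DecidableEq A]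
    (p : Ω → ℝ) (X : Ω → A) : ℝ :=
  -∑ a : A, distOf p X a * Real.log (distOf p X a)

/-- Conditional entropy H(X|Y). -/
noncomputable def CHd {Ω A B : Type*} [Fintype Ω] [Fintype A] [DecidableEq A]
    [Fintype B] [DecidableEq B] (p : Ω → ℝ) (X : Ω → A) (Y : Ω → B) : ℝ :=
  Hd p (fun ω => (X ω, Y ω)) - Hd p Y

/-- Mutual information I(X;Y). -/
noncomputable def MId {Ω A B : Type*} [Fintype Ω] [Fintype A] [DecidableEq A]
    [Fintype B] [DecidableEq B] (p : Ω → ℝ) (X : Ω → A) (Y : Ω → B) : ℝ :=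
  Hd p X + Hd p Y - Hd p (fun ω => (X ω, Y ω))

/-- Conditional mutual information I(X;Y|Z). -/
noncomputable def CMId {Ω A B C : Type*} [Fintype Ω] [Fintype A] [DecidableEq A]
    [Fintype B] [DecidableEq B] [Fintype C] [DecidableEq C]
    (p : Ω → ℝ) (X : Ω → A) (Y : Ω → B) (Z : Ω → C) : ℝ :=
  Hd p (fun ω => (X ω, Z ω)) + Hd p (fun ω => (Y ω, Z ω))
    - Hd p (fun ω => (X ω, Y ω, Z ω)) - Hd p Z

/-!
Expanding `I(U₁; X,Y₁ | U₂)` by the chain rule in both orders gives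
`I(U₁;Y₁|U₂) + I(U₁;X|Y₁,U₂) = I(U₁;X|U₂) + I(U₁;Y₁|X,U₂)`, and `H(X|U₂) − H(X|U₁,U₂) = I(U₁;X|U₂)`.
The chain `U₁ – Y₁ – (X,U₂)` kills `I(U₁;X|Y₁,U₂)`. The chain `(U₁,Y₁) – X – U₂` kills
`I(U₁;U₂|X)` and `I(U₁;U₂|Y₁,X)`, so expanding `I(U₁; Y₁,U₂ | X)` in both orders gives
`I(U₁;Y₁|X,U₂) = I(U₁;Y₁|X)`. A vanishing conditional mutual information splits into vanishing
pieces because every piece is nonnegative, which is Gibbs' inequality `log x ≤ x - 1` against the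
conditionally independent law `p(x,z) p(y,z) / p(z)`.
-/

section distOf

variable {Ω A B : Type*} [Fintype Ω] [DecidableEq A] (p : Ω → ℝ)

lemma distOf_nonneg (hp : ∀ ω, 0 ≤ p ω) (X : Ω → A) (a : A) : 0 ≤ distOf p X a :=
  sum_nonneg fun ω _ => hp ω

variable [Fintype A]

lemma sum_distOf (X : Ω → A) : ∑ a, distOf p X a = ∑ ω, p ω :=
  sum_fiberwise_of_maps_to (fun ω _ => mem_univ (X ω)) p

lemma sum_distOf_pair [DecidableEq B] (X : Ω → A) (Z : Ω → B) (b : B) :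
    ∑ a, distOf p (fun ω => (X ω, Z ω)) (a, b) = distOf p Z b := by
  unfold distOf
  rw [← sum_fiberwise_of_maps_to (fun ω _ => mem_univ (X ω))]
  refine sum_congr rfl fun a _ => ?_
  rw [filter_filter]
  simp only [Prod.mk.injEq, and_comm]

variable [DecidableEq B]

lemma distOf_comp (T : Ω → A) (f : A → B) (b : B) :
    distOf p (fun ω => f (T ω)) b = ∑ a ∈ univ.filter (fun a => f a = b), distOf p T a := by
  unfold distOf
  rw [sum_fiberwise_eq_sum_filter]
  congr 1
  ext ω
  simp

lemma distOf_comp_pos (hp : ∀ ω, 0 ≤ p ω) {T : Ω → A} {a : A} (h : 0 < distOf p T a)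
    (f : A → B) : 0 < distOf p (fun ω => f (T ω)) (f a) := by
  rw [distOf_comp p T f]
  exact h.trans_le (single_le_sum (fun a _ => distOf_nonneg p hp T a) (by simp))

lemma sum_distOf_comp_mul [Fintype B] (T : Ω → A) (f : A → B) (g : B → ℝ) :
    ∑ b, distOf p (fun ω => f (T ω)) b * g b = ∑ a, distOf p T a * g (f a) := by
  simp only [distOf_comp p T f, sum_mul]
  rw [← sum_fiberwise univ f]
  exact sum_congr rfl fun b _ => sum_congr rfl fun a ha => by rw [(mem_filter.mp ha).2]

lemma Hd_comp [Fintype B] (T : Ω → A) (f : A → B) :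
    Hd p (fun ω => f (T ω))
      = -∑ a, distOf p T a * log (distOf p (fun ω => f (T ω)) (f a)) := by
  rw [Hd, sum_distOf_comp_mul]

lemma Hd_eq_sum (X : Ω → A) : Hd p X = -∑ ω, p ω * log (distOf p X (X ω)) := by
  unfold Hd
  rw [← sum_fiberwise univ X (fun ω => p ω * log (distOf p X (X ω)))]
  congr 1
  refine sum_congr rfl fun a _ => ?_
  rw [distOf, sum_mul]
  exact sum_congr rfl fun ω hω => by rw [(mem_filter.mp hω).2]; rfl

lemma Hd_congr [Fintype B] {X : Ω → A} {Y : Ω → B} (h : ∀ ω ω', X ω = X ω' ↔ Y ω = Y ω') :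
    Hd p X = Hd p Y := by
  rw [Hd_eq_sum, Hd_eq_sum]
  congr 1
  refine sum_congr rfl fun ω _ => ?_
  unfold distOf
  rw [filter_congr fun ω' _ => h ω' ω]

end distOf

lemma sub_le_mul_log_sub_log {q r : ℝ} (hq : 0 ≤ q) (hr : 0 ≤ r) (hqr : 0 < q → 0 < r) :
    q - r ≤ q * (log q - log r) := by
  rcases hq.eq_or_lt with rfl | hq
  · simpa using hr
  have h := mul_le_mul_of_nonneg_left (log_le_sub_one_of_pos (div_pos (hqr hq) hq)) hq.le
  have hr' : q * (r / q - 1) = r - q := by field_simp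
  rw [log_div (hqr hq).ne' hq.ne', hr'] at h
  linarith

section nonneg

variable {Ω A B C : Type*} [Fintype Ω] [DecidableEq A] [DecidableEq B] [DecidableEq C]
  (p : Ω → ℝ) (X : Ω → A) (Y : Ω → B) (Z : Ω → C)

/-- The law `p(x,z) p(y,z) / p(z)` under which `X` and `Y` are conditionally independent given `Z`
while `(X,Z)` and `(Y,Z)` keep their laws; `CMId p X Y Z` is the relative entropy of the law of
`(X,Y,Z)` with respect to it. At `p(z) = 0` the junk value `x / 0 = 0` is the right one: the
total mass equals that of `p`. -/
noncomputable def condIndepDist (t : A × B × C) : ℝ :=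
  distOf p (fun ω => (X ω, Z ω)) (t.1, t.2.2) * distOf p (fun ω => (Y ω, Z ω)) (t.2.1, t.2.2)
    / distOf p Z t.2.2

lemma condIndepDist_nonneg (hp : ∀ ω, 0 ≤ p ω) (t : A × B × C) :
    0 ≤ condIndepDist p X Y Z t :=
  div_nonneg (mul_nonneg (distOf_nonneg p hp _ _) (distOf_nonneg p hp _ _))
    (distOf_nonneg p hp _ _)

variable [Fintype A] [Fintype B] [Fintype C]

lemma sum_condIndepDist : ∑ t, condIndepDist p X Y Z t = ∑ ω, p ω := by
  have hc : ∀ c, ∑ b, ∑ a, condIndepDist p X Y Z (a, b, c) = distOf p Z c := fun c => by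
    simp only [condIndepDist, ← sum_div, ← mul_sum, ← sum_mul, sum_distOf_pair, mul_self_div_self]
  rw [← sum_distOf p Z, Fintype.sum_prod_type, sum_comm, Fintype.sum_prod_type, sum_comm]
  exact sum_congr rfl fun c _ => hc c

lemma condIndepDist_pos (hp : ∀ ω, 0 ≤ p ω) {t : A × B × C}
    (ht : 0 < distOf p (fun ω => (X ω, Y ω, Z ω)) t) : 0 < condIndepDist p X Y Z t :=
  div_pos (mul_pos (distOf_comp_pos p hp ht fun t => (t.1, t.2.2))
    (distOf_comp_pos p hp ht fun t => (t.2.1, t.2.2))) (distOf_comp_pos p hp ht fun t => t.2.2)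

lemma CMId_eq_sum_mul_log_sub (hp : ∀ ω, 0 ≤ p ω) :
    CMId p X Y Z = ∑ t, distOf p (fun ω => (X ω, Y ω, Z ω)) t
      * (log (distOf p (fun ω => (X ω, Y ω, Z ω)) t) - log (condIndepDist p X Y Z t)) := by
  set T := fun ω => (X ω, Y ω, Z ω)
  have eXZ : Hd p (fun ω => (X ω, Z ω))
      = -∑ t, distOf p T t * log (distOf p (fun ω => (X ω, Z ω)) (t.1, t.2.2)) :=
    Hd_comp p T (fun t => (t.1, t.2.2))
  have eYZ : Hd p (fun ω => (Y ω, Z ω))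
      = -∑ t, distOf p T t * log (distOf p (fun ω => (Y ω, Z ω)) (t.2.1, t.2.2)) :=
    Hd_comp p T (fun t => (t.2.1, t.2.2))
  have eZ : Hd p Z = -∑ t, distOf p T t * log (distOf p Z t.2.2) := Hd_comp p T (fun t => t.2.2)
  have hlog : ∀ t, distOf p T t * log (condIndepDist p X Y Z t)
      = distOf p T t * (log (distOf p (fun ω => (X ω, Z ω)) (t.1, t.2.2))
        + log (distOf p (fun ω => (Y ω, Z ω)) (t.2.1, t.2.2)) - log (distOf p Z t.2.2)) := by
    intro t
    rcases (distOf_nonneg p hp T t).eq_or_lt with h0 | hpos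
    · simp [← h0]
    have hXZ := distOf_comp_pos p hp hpos fun t => (t.1, t.2.2)
    have hYZ := distOf_comp_pos p hp hpos fun t => (t.2.1, t.2.2)
    have hZ := distOf_comp_pos p hp hpos fun t => t.2.2
    rw [condIndepDist, log_div (mul_pos hXZ hYZ).ne' hZ.ne', log_mul hXZ.ne' hYZ.ne']
  simp only [mul_sub, sum_sub_distrib, hlog, mul_add, sum_add_distrib, CMId, eXZ, eYZ, eZ]
  rw [Hd]
  ring

theorem CMId_nonneg (hp : ∀ ω, 0 ≤ p ω) : 0 ≤ CMId p X Y Z := by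
  set q := distOf p (fun ω => (X ω, Y ω, Z ω))
  calc 0 = ∑ t, (q t - condIndepDist p X Y Z t) := by
        rw [sum_sub_distrib, sum_distOf, sum_condIndepDist, sub_self]
    _ ≤ ∑ t, q t * (log (q t) - log (condIndepDist p X Y Z t)) :=
        sum_le_sum fun t _ => sub_le_mul_log_sub_log (distOf_nonneg p hp _ t)
          (condIndepDist_nonneg p X Y Z hp t) (condIndepDist_pos p X Y Z hp)
    _ = CMId p X Y Z := (CMId_eq_sum_mul_log_sub p X Y Z hp).symm

end nonneg

section chainRule

variable {Ω A B C D A' B' C' : Type*} [Fintype Ω] [Fintype A] [DecidableEq A] [Fintype B]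
  [DecidableEq B] [Fintype C] [DecidableEq C] [Fintype D] [DecidableEq D] (p : Ω → ℝ)

lemma CMId_congr [Fintype A'] [DecidableEq A'] [Fintype B'] [DecidableEq B'] [Fintype C']
    [DecidableEq C'] {X : Ω → A} {Y : Ω → B} {Z : Ω → C} {X' : Ω → A'} {Y' : Ω → B'}
    {Z' : Ω → C'} (hX : ∀ ω ω', X ω = X ω' ↔ X' ω = X' ω')
    (hY : ∀ ω ω', Y ω = Y ω' ↔ Y' ω = Y' ω') (hZ : ∀ ω ω', Z ω = Z ω' ↔ Z' ω = Z' ω') :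
    CMId p X Y Z = CMId p X' Y' Z' := by
  unfold CMId
  congr 3
  all_goals exact Hd_congr p fun ω ω' => by simp only [Prod.mk.injEq, hX ω ω', hY ω ω', hZ ω ω']

lemma CMId_comm (X : Ω → A) (Y : Ω → B) (Z : Ω → C) : CMId p X Y Z = CMId p Y X Z := by
  have h : Hd p (fun ω => (X ω, Y ω, Z ω)) = Hd p (fun ω => (Y ω, X ω, Z ω)) :=
    Hd_congr p fun _ _ => by simp only [Prod.mk.injEq]; tauto
  unfold CMId
  rw [h]
  ring

lemma CMId_prod_right_comm (X : Ω → A) (Y : Ω → B) (Z : Ω → C) (W : Ω → D) :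
    CMId p X (fun ω => (Y ω, Z ω)) W = CMId p X (fun ω => (Z ω, Y ω)) W :=
  CMId_congr p (fun _ _ => Iff.rfl) (fun _ _ => by simp only [Prod.mk.injEq]; tauto)
    fun _ _ => Iff.rfl

lemma CMId_cond_comm (X : Ω → A) (Y : Ω → B) (Z : Ω → C) (W : Ω → D) :
    CMId p X Y (fun ω => (Z ω, W ω)) = CMId p X Y (fun ω => (W ω, Z ω)) :=
  CMId_congr p (fun _ _ => Iff.rfl) (fun _ _ => Iff.rfl)
    fun _ _ => by simp only [Prod.mk.injEq]; tauto

lemma CHd_sub_CHd (X : Ω → A) (Y : Ω → B) (Z : Ω → C) :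
    CHd p X Z - CHd p X (fun ω => (Y ω, Z ω)) = CMId p Y X Z := by
  have h : Hd p (fun ω => (X ω, Y ω, Z ω)) = Hd p (fun ω => (Y ω, X ω, Z ω)) :=
    Hd_congr p fun _ _ => by simp only [Prod.mk.injEq]; tauto
  unfold CHd CMId
  rw [h]
  ring

lemma CMId_prod_right (X : Ω → A) (Y : Ω → B) (Z : Ω → C) (W : Ω → D) :
    CMId p X (fun ω => (Y ω, Z ω)) W = CMId p X Y W + CMId p X Z (fun ω => (Y ω, W ω)) := by
  have h₁ : Hd p (fun ω => ((Y ω, Z ω), W ω)) = Hd p (fun ω => (Z ω, Y ω, W ω)) :=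
    Hd_congr p fun _ _ => by simp only [Prod.mk.injEq]; tauto
  have h₂ : Hd p (fun ω => (X ω, (Y ω, Z ω), W ω)) = Hd p (fun ω => (X ω, Z ω, Y ω, W ω)) :=
    Hd_congr p fun _ _ => by simp only [Prod.mk.injEq]; tauto
  unfold CMId
  rw [h₁, h₂]
  ring

lemma CMId_add_CMId_comm (X : Ω → A) (Y : Ω → B) (Z : Ω → C) (W : Ω → D) :
    CMId p X Y W + CMId p X Z (fun ω => (Y ω, W ω))
      = CMId p X Z W + CMId p X Y (fun ω => (Z ω, W ω)) := by
  rw [← CMId_prod_right, ← CMId_prod_right, CMId_prod_right_comm]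

lemma CMId_prod_right_eq_zero_iff (hp : ∀ ω, 0 ≤ p ω) (X : Ω → A) (Y : Ω → B) (Z : Ω → C)
    (W : Ω → D) : CMId p X (fun ω => (Y ω, Z ω)) W = 0 ↔
      CMId p X Y W = 0 ∧ CMId p X Z (fun ω => (Y ω, W ω)) = 0 := by
  rw [CMId_prod_right]
  exact add_eq_zero_iff_of_nonneg (CMId_nonneg p X Y W hp) (CMId_nonneg p _ _ _ hp)

end chainRule

theorem stmt14_general {Ω A B C D : Type*} [Fintype Ω]
    [Fintype A] [DecidableEq A] [Fintype B] [DecidableEq B] [Fintype C] [DecidableEq C]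
    [Fintype D] [DecidableEq D]
    (p : Ω → ℝ) (hp : ∀ ω, 0 ≤ p ω)
    (U1 : Ω → A) (Y1 : Ω → B) (X : Ω → C) (U2 : Ω → D)
    -- Markov chains U1 - Y1 - (X,U2) and (U1,Y1) - X - U2
    (hM1 : CMId p U1 (fun ω => (X ω, U2 ω)) Y1 = 0)
    (hM2 : CMId p (fun ω => (U1 ω, Y1 ω)) U2 X = 0) :
    CMId p U1 Y1 U2
      = CHd p X U2 - CHd p X (fun ω => (U1 ω, U2 ω)) + CMId p U1 Y1 X := by
  have hU1X : CMId p U1 X (fun ω => (Y1 ω, U2 ω)) = 0 := by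
    rw [CMId_prod_right_comm, CMId_prod_right_eq_zero_iff p hp] at hM1
    rw [CMId_cond_comm, hM1.2]
  rw [CMId_comm] at hM2
  have hU1U2 : CMId p U1 U2 X = 0 := by
    rw [CMId_comm, ((CMId_prod_right_eq_zero_iff p hp _ _ _ _).1 hM2).1]
  have hU1U2_Y1 : CMId p U1 U2 (fun ω => (Y1 ω, X ω)) = 0 := by
    rw [CMId_prod_right_comm, CMId_prod_right_eq_zero_iff p hp] at hM2
    rw [CMId_comm, hM2.2]
  have hgivenU2 := CMId_add_CMId_comm p U1 Y1 X U2
  have hgivenX := CMId_add_CMId_comm p U1 Y1 U2 X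
  rw [CMId_cond_comm p U1 Y1 X U2] at hgivenU2
  rw [CHd_sub_CHd]
  linarith

theorem stmt14 {Ω A B C D : Type*} [Fintype Ω]
    [Fintype A] [DecidableEq A] [Fintype B] [DecidableEq B] [Fintype C] [DecidableEq C]
    [Fintype D] [DecidableEq D]
    (p : Ω → ℝ) (hp : ∀ ω, 0 ≤ p ω) (hp1 : ∑ ω, p ω = 1)
    (U1 : Ω → A) (Y1 : Ω → B) (X : Ω → C) (U2 : Ω → D)
    -- Markov chains U1 - Y1 - (X,U2) and (U1,Y1) - X - U2
    (hM1 : CMId p U1 (fun ω => (X ω, U2 ω)) Y1 = 0)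
    (hM2 : CMId p (fun ω => (U1 ω, Y1 ω)) U2 X = 0) :
    CMId p U1 Y1 U2
      = CHd p X U2 - CHd p X (fun ω => (U1 ω, U2 ω)) + CMId p U1 Y1 X :=
  stmt14_general p hp U1 Y1 X U2 hM1 hM2
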